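/- Let ρ_i = |i⟩⟨i| for i = 1,...,m be m distinct computational-basis projectors on C^(2^n), labeled y_i = +1 for i ≤ m/2 and y_i = -1 for i > m/2 (m even). If a Hermitian operator O' and threshold b' ∈ ℝ satisfy y_i·(Tr[O'ρ_i] - b') ≥ γ' for all i, then ||O'||_F ≥ γ'·√m. In particular no observable with Frobenius norm strictly less than η can achieve margin η/√m on these examples. -/

import Mathlib

/-- The Frobenius norm of a complex matrix, `‖A‖_F = √(Tr[Aᴴ A])`. -/
noncomputable def frobeniusNorm {N : ℕ} (A : Matrix (Fin N) (Fin N) ℂ) : ℝ :=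
  Real.sqrt ((A.conjTranspose * A).trace).re

/-!
Summing the margin conditions against the labels `y_i`, whose sum vanishes because `m` is even,
removes the threshold and gives `m γ' ≤ ∑ y_i Re O'_{f i, f i} = Re Tr[O' (ρ₊ - ρ₋)]`.
By Cauchy–Schwarz this is at most `‖y‖₂ · ‖diag O'‖₂ ≤ √m ‖O'‖_F`.
-/

open Finset

section

variable {ι : Type*} [Fintype ι] {N : ℕ}

lemma re_trace_conjTranspose_mul_self (A : Matrix (Fin N) (Fin N) ℂ) :
    ((A.conjTranspose * A).trace).re = ∑ j, ∑ k, Complex.normSq (A k j) := by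
  simp [Matrix.trace, Matrix.mul_apply, Complex.normSq_apply, Complex.mul_re]

lemma frobeniusNorm_sq (A : Matrix (Fin N) (Fin N) ℂ) :
    frobeniusNorm A ^ 2 = ∑ j, ∑ k, Complex.normSq (A k j) := by
  rw [frobeniusNorm, re_trace_conjTranspose_mul_self, Real.sq_sqrt]
  exact sum_nonneg fun j _ => sum_nonneg fun k _ => Complex.normSq_nonneg _

lemma sum_sq_re_diag_comp_le_frobeniusNorm_sq
    (A : Matrix (Fin N) (Fin N) ℂ) {f : ι → Fin N} (hf : Function.Injective f) :
    ∑ i, (A (f i) (f i)).re ^ 2 ≤ frobeniusNorm A ^ 2 := by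
  classical
  calc ∑ i, (A (f i) (f i)).re ^ 2 ≤ ∑ i, Complex.normSq (A (f i) (f i)) :=
        sum_le_sum fun i _ => by
          rw [Complex.normSq_apply, ← sq]; nlinarith [sq_nonneg (A (f i) (f i)).im]
    _ = ∑ j ∈ univ.image f, Complex.normSq (A j j) :=
        (sum_image (f := fun j => Complex.normSq (A j j)) fun _ _ _ _ h => hf h).symm
    _ ≤ ∑ j, Complex.normSq (A j j) :=
        sum_le_sum_of_subset_of_nonneg (subset_univ _) fun _ _ _ => Complex.normSq_nonneg _
    _ ≤ ∑ j, ∑ k, Complex.normSq (A k j) :=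
        sum_le_sum fun j _ => single_le_sum (f := fun k => Complex.normSq (A k j))
          (fun _ _ => Complex.normSq_nonneg _) (mem_univ j)
    _ = frobeniusNorm A ^ 2 := (frobeniusNorm_sq A).symm

lemma sum_mul_re_diag_comp_le
    (A : Matrix (Fin N) (Fin N) ℂ) {f : ι → Fin N} (hf : Function.Injective f) (w : ι → ℝ) :
    ∑ i, w i * (A (f i) (f i)).re ≤ √(∑ i, w i ^ 2) * frobeniusNorm A := by
  refine (Real.sum_mul_le_sqrt_mul_sqrt _ _ _).trans ?_
  gcongr
  calc √(∑ i, (A (f i) (f i)).re ^ 2) ≤ √(frobeniusNorm A ^ 2) :=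
        Real.sqrt_le_sqrt (sum_sq_re_diag_comp_le_frobeniusNorm_sq A hf)
    _ = frobeniusNorm A := Real.sqrt_sq (Real.sqrt_nonneg _)

end

lemma sum_sign_lt_half_eq_zero {m : ℕ} (hm : Even m) :
    ∑ i : Fin m, (if (i : ℕ) < m / 2 then (1 : ℝ) else -1) = 0 := by
  obtain ⟨k, rfl⟩ := hm
  have hk : (k + k) / 2 = k := by omega
  simp [Fin.sum_univ_add, hk]

lemma sum_sign_lt_half_sq (m : ℕ) :
    ∑ i : Fin m, (if (i : ℕ) < m / 2 then (1 : ℝ) else -1) ^ 2 = m := by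
  simp [apply_ite (· ^ 2)]

theorem stmt_4_general (n m : ℕ) (hm : 0 < m) (hme : Even m)
    (f : Fin m → Fin (2^n)) (hf : Function.Injective f)
    (O' : Matrix (Fin (2^n)) (Fin (2^n)) ℂ) (b' γ' : ℝ)
    (hmargin : ∀ i : Fin m,
      (if (i : ℕ) < m / 2 then (1 : ℝ) else -1) *
          (((O' * Matrix.single (f i) (f i) (1 : ℂ)).trace).re - b') ≥ γ') :
    frobeniusNorm O' ≥ γ' * Real.sqrt m ∧
      ∀ η : ℝ, 0 < η → frobeniusNorm O' < η → γ' < η / Real.sqrt m := by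
  set y : Fin m → ℝ := fun i => if (i : ℕ) < m / 2 then 1 else -1
  have hsqrt : 0 < √(m : ℝ) := Real.sqrt_pos.mpr (by exact_mod_cast hm)
  have htrace : ∀ i, ((O' * Matrix.single (f i) (f i) 1).trace).re = (O' (f i) (f i)).re := by
    simp [Matrix.trace_mul_single]
  have hsignal : m * γ' ≤ ∑ i, y i * (O' (f i) (f i)).re :=
    calc (m : ℝ) * γ' = ∑ _i : Fin m, γ' := by simp
      _ ≤ ∑ i, y i * ((O' (f i) (f i)).re - b') :=
          sum_le_sum fun i _ => by rw [← htrace]; exact hmargin i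
      _ = ∑ i, y i * (O' (f i) (f i)).re := by
          simp only [mul_sub, sum_sub_distrib, ← sum_mul, y, sum_sign_lt_half_eq_zero hme,
            zero_mul, sub_zero]
  have hcs := sum_mul_re_diag_comp_le O' hf y
  rw [sum_sign_lt_half_sq] at hcs
  have key : γ' * √(m : ℝ) ≤ frobeniusNorm O' := by
    refine le_of_mul_le_mul_left ?_ hsqrt
    calc √(m : ℝ) * (γ' * √m) = m * γ' := by
          rw [mul_left_comm, Real.mul_self_sqrt (Nat.cast_nonneg m), mul_comm]
      _ ≤ √m * frobeniusNorm O' := hsignal.trans hcs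
  exact ⟨key, fun η _ hη => (lt_div_iff₀ hsqrt).mpr (key.trans_lt hη)⟩

/-- If `ρ_i = |f i⟩⟨f i|` are `m` distinct computational-basis projectors labeled
`+1` for `i < m/2` and `-1` otherwise (`m` even), and a Hermitian `O'` with threshold
`b'` achieves margin `γ'` on all of them, then `‖O'‖_F ≥ γ'·√m`; in particular no
observable of Frobenius norm `< η` achieves margin `η/√m` on these examples. -/
theorem stmt_4 (n m : ℕ) (hm : 0 < m) (hm2 : m ≤ 2^n) (hme : Even m)
    (f : Fin m → Fin (2^n)) (hf : Function.Injective f)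
    (O' : Matrix (Fin (2^n)) (Fin (2^n)) ℂ) (hO' : O'.IsHermitian) (b' γ' : ℝ)
    (hmargin : ∀ i : Fin m,
      (if (i : ℕ) < m / 2 then (1 : ℝ) else -1) *
          (((O' * Matrix.single (f i) (f i) (1 : ℂ)).trace).re - b') ≥ γ') :
    frobeniusNorm O' ≥ γ' * Real.sqrt m ∧
      ∀ η : ℝ, 0 < η → frobeniusNorm O' < η → γ' < η / Real.sqrt m :=
  stmt_4_general n m hm hme f hf O' b' γ' hmargin
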